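/- Let P ⊆ [[n]] be a poset normal in [[n]] and λ ∈ S_P. Then the number of two-sided U_P-orbits contained in the two-sided U_n-orbit U_n λ U_n equals q^{|aux_P(λ)|}, where aux_P(λ) = adj_{[[n]]}(λ) \ adj_P(λ). -/
import Mathlib


open scoped Classical

abbrev Mat (n : ℕ) (F : Type*) := Matrix (Fin n) (Fin n) F

/-- The set of positions strictly above the diagonal. -/
def PosUpper (n : ℕ) : Set (Fin n × Fin n) := {p | p.1 < p.2}

/-- A poset on `[n]`: a set of strictly-upper positions closed under composition. -/
def IsPoset {n : ℕ} (P : Set (Fin n × Fin n)) : Prop :=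
  P ⊆ PosUpper n ∧ ∀ i j k : Fin n, (i, j) ∈ P → (j, k) ∈ P → (i, k) ∈ P

/-- The normality condition for a pattern poset. -/
def NormalPoset {n : ℕ} (P : Set (Fin n × Fin n)) : Prop :=
  ∀ i j k l : Fin n, i ≤ j → j < k → k ≤ l → (i, l) ∉ P → (j, k) ∉ P

/-- The pattern group `U_P` (as a set of matrices). -/
def UPg {n : ℕ} {F : Type*} [Field F] (P : Set (Fin n × Fin n)) : Set (Mat n F) :=
  {g | (∀ i, g i i = 1) ∧ ∀ i j : Fin n, i ≠ j → (i, j) ∉ P → g i j = 0}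

/-- The algebra `n_P` of strictly upper triangular matrices supported on `P`. -/
def nPa {n : ℕ} {F : Type*} [Field F] (P : Set (Fin n × Fin n)) : Set (Mat n F) :=
  {X | ∀ i j : Fin n, (i, j) ∉ P → X i j = 0}

/-- The support of a matrix. -/
def msupp {n : ℕ} {F : Type*} [Field F] (X : Mat n F) : Set (Fin n × Fin n) :=
  {p | X p.1 p.2 ≠ 0}

/-- `F_q`-labeled set partitions: matrices in `n_P` with at most one nonzero entry
in each row and each column. -/
def SPa {n : ℕ} {F : Type*} [Field F] (P : Set (Fin n × Fin n)) : Set (Mat n F) :=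
  {X | X ∈ nPa P ∧ (∀ i j j' : Fin n, X i j ≠ 0 → X i j' ≠ 0 → j = j') ∧
       (∀ i i' j : Fin n, X i j ≠ 0 → X i' j ≠ 0 → i = i')}

/-- Positions reachable on the left: `adj^L_Q(λ)`. -/
def adjL {n : ℕ} {F : Type*} [Field F] (Q : Set (Fin n × Fin n)) (lam : Mat n F) :
    Set (Fin n × Fin n) :=
  {p | ∃ j : Fin n, (j, p.2) ∈ msupp lam ∧ (p.1, j) ∈ Q}

/-- Positions reachable on the right: `adj^R_Q(λ)`. -/
def adjR {n : ℕ} {F : Type*} [Field F] (Q : Set (Fin n × Fin n)) (lam : Mat n F) :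
    Set (Fin n × Fin n) :=
  {p | ∃ j : Fin n, (p.1, j) ∈ msupp lam ∧ (j, p.2) ∈ Q}

/-- `adj_Q(λ) = adj^L_Q(λ) ∪ adj^R_Q(λ)`. -/
def adjF {n : ℕ} {F : Type*} [Field F] (Q : Set (Fin n × Fin n)) (lam : Mat n F) :
    Set (Fin n × Fin n) := adjL Q lam ∪ adjR Q lam

/-- `aux^L_P(λ) = adj^L_{[[n]]}(λ) \ adj^L_P(λ)`. -/
def auxL {n : ℕ} {F : Type*} [Field F] (P : Set (Fin n × Fin n)) (lam : Mat n F) :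
    Set (Fin n × Fin n) := adjL (PosUpper n) lam \ adjL P lam

/-- `aux_P(λ) = adj_{[[n]]}(λ) \ adj_P(λ)`. -/
def auxF {n : ℕ} {F : Type*} [Field F] (P : Set (Fin n × Fin n)) (lam : Mat n F) :
    Set (Fin n × Fin n) := adjF (PosUpper n) lam \ adjF P lam

section Basic
variable {n : ℕ} {F : Type*} [Field F]

lemma isPoset_posUpper : IsPoset (PosUpper n) := by
  refine ⟨fun p hp => hp, fun i j k hij hjk => ?_⟩
  exact lt_trans (show i < j from hij) (show j < k from hjk)

lemma nPa_mono {Q Q' : Set (Fin n × Fin n)} (h : Q ⊆ Q') :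
    nPa (F := F) (n := n) Q ⊆ nPa Q' := fun X hX i j hij => hX i j (fun hq => hij (h hq))

lemma UPg_mono {Q Q' : Set (Fin n × Fin n)} (h : Q ⊆ Q') :
    UPg (F := F) (n := n) Q ⊆ UPg Q' :=
  fun g hg => ⟨hg.1, fun i j hne hij => hg.2 i j hne (fun hq => hij (h hq))⟩

lemma nPa_add_mem {Q : Set (Fin n × Fin n)} {X Y : Mat n F}
    (hX : X ∈ nPa Q) (hY : Y ∈ nPa Q) : X + Y ∈ nPa Q := by
  intro i j hij
  simp [Matrix.add_apply, hX i j hij, hY i j hij]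

lemma nPa_neg_mem {Q : Set (Fin n × Fin n)} {X : Mat n F}
    (hX : X ∈ nPa Q) : -X ∈ nPa Q := by
  intro i j hij
  simp [Matrix.neg_apply, hX i j hij]

def nSub (Q : Set (Fin n × Fin n)) : Submodule F (Mat n F) where
  carrier := nPa Q
  add_mem' := fun ha hb => nPa_add_mem ha hb
  zero_mem' := by intro i j _; simp
  smul_mem' := by intro c a ha i j hij; simp [Matrix.smul_apply, ha i j hij]

lemma nPa_mul_mem {Q : Set (Fin n × Fin n)} (hQ : IsPoset Q) {X Y : Mat n F}
    (hX : X ∈ nPa Q) (hY : Y ∈ nPa Q) : X * Y ∈ nPa Q := by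
  intro i j hij
  rw [Matrix.mul_apply]
  refine Finset.sum_eq_zero fun k _ => ?_
  by_cases h1 : X i k = 0
  · simp [h1]
  by_cases h2 : Y k j = 0
  · simp [h2]
  have hik : (i, k) ∈ Q := by by_contra h; exact h1 (hX i k h)
  have hkj : (k, j) ∈ Q := by by_contra h; exact h2 (hY k j h)
  exact absurd (hQ.2 i k j hik hkj) hij

lemma nPa_mul_mem_left {P : Set (Fin n × Fin n)} (hP : IsPoset P) (hN : NormalPoset P)
    {X Y : Mat n F} (hX : X ∈ nPa (PosUpper n)) (hY : Y ∈ nPa P) : X * Y ∈ nPa P := by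
  intro i j hij
  rw [Matrix.mul_apply]
  refine Finset.sum_eq_zero fun k _ => ?_
  by_cases h1 : X i k = 0
  · simp [h1]
  by_cases h2 : Y k j = 0
  · simp [h2]
  have hik : (i, k) ∈ PosUpper n := by by_contra h; exact h1 (hX i k h)
  have hkj : (k, j) ∈ P := by by_contra h; exact h2 (hY k j h)
  exact absurd hkj (hN i k j j (le_of_lt hik) (hP.1 hkj) le_rfl hij)

lemma nPa_mul_mem_right {P : Set (Fin n × Fin n)} (hP : IsPoset P) (hN : NormalPoset P)
    {X Y : Mat n F} (hX : X ∈ nPa P) (hY : Y ∈ nPa (PosUpper n)) : X * Y ∈ nPa P := by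
  intro i j hij
  rw [Matrix.mul_apply]
  refine Finset.sum_eq_zero fun k _ => ?_
  by_cases h1 : X i k = 0
  · simp [h1]
  by_cases h2 : Y k j = 0
  · simp [h2]
  have hik : (i, k) ∈ P := by by_contra h; exact h1 (hX i k h)
  have hkj : (k, j) ∈ PosUpper n := by by_contra h; exact h2 (hY k j h)
  exact absurd hik (hN i i k j le_rfl (hP.1 hik) (le_of_lt hkj) hij)

lemma nPa_pow_zero {X : Mat n F} (hX : X ∈ nPa (PosUpper n)) : X ^ n = 0 := by
  have key : ∀ m (i j : Fin n), (j : ℕ) < (i : ℕ) + m → (X ^ m) i j = 0 := by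
    intro m
    induction m with
    | zero =>
      intro i j h
      rw [pow_zero]
      exact Matrix.one_apply_ne (fun he => by simp [he] at h)
    | succ m ih =>
      intro i j h
      rw [pow_succ']
      rw [Matrix.mul_apply]
      refine Finset.sum_eq_zero fun k _ => ?_
      by_cases h1 : X i k = 0
      · simp [h1]
      have hik : (i, k) ∈ PosUpper n := by by_contra hc; exact h1 (hX i k hc)
      have : (k : ℕ) < (k : ℕ) + 1 := Nat.lt_succ_self _
      have hik' : (i : ℕ) < (k : ℕ) := hik
      rw [ih k j (by omega), mul_zero]
  ext i j
  simp only [Matrix.zero_apply]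
  exact key n i j (by omega)

lemma sub_one_mem_nPa {Q : Set (Fin n × Fin n)} (hsub : Q ⊆ PosUpper n) {g : Mat n F}
    (hg : g ∈ UPg Q) : g - 1 ∈ nPa Q := by
  intro i j hij
  rcases eq_or_ne i j with rfl | hne
  · simp [Matrix.sub_apply, hg.1 i]
  · simp [Matrix.sub_apply, hg.2 i j hne hij, Matrix.one_apply_ne hne]

lemma one_add_mem_UPg {Q : Set (Fin n × Fin n)} (hsub : Q ⊆ PosUpper n) {X : Mat n F}
    (hX : X ∈ nPa Q) : 1 + X ∈ UPg Q := by
  constructor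
  · intro i
    have hXi : X i i = 0 := hX i i (fun h => lt_irrefl i (hsub h))
    simp [Matrix.add_apply, hXi]
  · intro i j hne hij
    simp [Matrix.add_apply, hX i j hij, Matrix.one_apply_ne hne]

lemma one_mem_UPg {Q : Set (Fin n × Fin n)} : (1 : Mat n F) ∈ UPg Q :=
  ⟨fun i => Matrix.one_apply_eq i, fun _ _ hne _ => Matrix.one_apply_ne hne⟩

lemma UPg_mul_mem {Q : Set (Fin n × Fin n)} (hQ : IsPoset Q) {g h : Mat n F}
    (hg : g ∈ UPg Q) (hh : h ∈ UPg Q) : g * h ∈ UPg Q := by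
  have hX := sub_one_mem_nPa hQ.1 hg
  have hY := sub_one_mem_nPa hQ.1 hh
  have hgh : g * h = 1 + ((g - 1) + (h - 1) + (g - 1) * (h - 1)) := by noncomm_ring
  rw [hgh]
  exact one_add_mem_UPg hQ.1 (nPa_add_mem (nPa_add_mem hX hY) (nPa_mul_mem hQ hX hY))

lemma nPa_pow_succ_mem {Q : Set (Fin n × Fin n)} (hQ : IsPoset Q) {X : Mat n F}
    (hX : X ∈ nPa Q) : ∀ m, X ^ (m + 1) ∈ nPa Q := by
  intro m
  induction m with
  | zero => simpa using hX
  | succ m ih => rw [pow_succ]; exact nPa_mul_mem hQ ih hX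

lemma UPg_exists_inv {Q : Set (Fin n × Fin n)} (hQ : IsPoset Q) {g : Mat n F}
    (hg : g ∈ UPg Q) : ∃ g', g' ∈ UPg Q ∧ g * g' = 1 ∧ g' * g = 1 := by
  set X := g - 1 with hXdef
  have hX : X ∈ nPa Q := sub_one_mem_nPa hQ.1 hg
  have hXU : (-X) ∈ nPa (PosUpper n) := nPa_neg_mem (nPa_mono hQ.1 hX)
  have hpow : (-X) ^ (n + 1) = 0 := by
    rw [pow_succ, nPa_pow_zero hXU, zero_mul]
  set S : Mat n F := ∑ i ∈ Finset.range (n + 1), (-X) ^ i with hS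
  have hneg : (-X) - 1 = -(1 + X) := by abel
  have hgX : g = 1 + X := by rw [hXdef]; abel
  have h1 : S * (1 + X) = 1 := by
    have hg1 := geom_sum_mul (-X) (n + 1)
    rw [hneg, hpow, mul_neg, zero_sub] at hg1
    exact neg_injective hg1
  have h2 : (1 + X) * S = 1 := by
    have hg2 := mul_geom_sum (-X) (n + 1)
    rw [hneg, hpow, neg_mul, zero_sub] at hg2
    exact neg_injective hg2
  refine ⟨S, ?_, ?_, ?_⟩
  · have hSsplit : S = 1 + ∑ i ∈ Finset.range n, (-X) ^ (i + 1) := by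
      rw [hS, Finset.sum_range_succ']
      rw [pow_zero]
      abel
    rw [hSsplit]
    refine one_add_mem_UPg hQ.1 ?_
    have hmem : ∀ i ∈ Finset.range n, (-X) ^ (i + 1) ∈ nSub (F := F) Q :=
      fun i _ => nPa_pow_succ_mem hQ (nPa_neg_mem hX) i
    exact Submodule.sum_mem (nSub Q) hmem
  · rw [hgX]; exact h2
  · rw [hgX]; exact h1

end Basic

section Orb
variable {n : ℕ} {F : Type*} [Field F]

/-- Two-sided orbit of `x` under `U_Q`. -/
def orbS (Q : Set (Fin n × Fin n)) (x : Mat n F) : Set (Mat n F) :=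
  {y | ∃ a ∈ UPg (F := F) Q, ∃ b ∈ UPg (F := F) Q, y = a * x * b}

lemma orbS_self (Q : Set (Fin n × Fin n)) (x : Mat n F) : x ∈ orbS Q x :=
  ⟨1, one_mem_UPg, 1, one_mem_UPg, by simp⟩

lemma orbS_eq_of_mem {Q : Set (Fin n × Fin n)} (hQ : IsPoset Q) {x y : Mat n F}
    (hy : y ∈ orbS Q x) : orbS Q y = orbS Q x := by
  obtain ⟨a, ha, b, hb, rfl⟩ := hy
  obtain ⟨a', ha', haa', ha'a⟩ := UPg_exists_inv hQ ha
  obtain ⟨b', hb', hbb', hb'b⟩ := UPg_exists_inv hQ hb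
  have ca : ∀ t : Mat n F, a' * (a * t) = t := fun t => by rw [← mul_assoc, ha'a, one_mul]
  ext z
  constructor
  · rintro ⟨c, hc, d, hd, rfl⟩
    exact ⟨c * a, UPg_mul_mem hQ hc ha, b * d, UPg_mul_mem hQ hb hd, by
      simp [mul_assoc]⟩
  · rintro ⟨c, hc, d, hd, rfl⟩
    refine ⟨c * a', UPg_mul_mem hQ hc ha', b' * d, UPg_mul_mem hQ hb' hd, ?_⟩
    simp only [mul_assoc, ca]
    rw [show b * (b' * d) = d from by rw [← mul_assoc, hbb', one_mul]]

end Orb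

section Counting
variable {n : ℕ} {F : Type*} [Field F] [Fintype F]

lemma card_fiber_const {α β : Type*} [Fintype α] (f : α → β) (s : ℕ)
    (h : ∀ b ∈ Set.range f, Nat.card {a // f a = b} = s) :
    Fintype.card α = Nat.card (Set.range f) * s := by
  classical
  rw [← Finset.card_univ,
    Finset.card_eq_sum_card_fiberwise
      (f := f) (t := Finset.univ.image f)
      (fun x _ => Finset.mem_image_of_mem f (Finset.mem_univ x))]
  have hterm : ∀ b ∈ Finset.univ.image f,
      (Finset.univ.filter (fun a => f a = b)).card = s := by
    intro b hb
    have hbr : b ∈ Set.range f := by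
      rcases Finset.mem_image.1 hb with ⟨a, _, rfl⟩; exact ⟨a, rfl⟩
    rw [← h b hbr, Nat.card_eq_fintype_card, Fintype.card_subtype]
  rw [Finset.sum_congr rfl hterm, Finset.sum_const, smul_eq_mul]
  congr 1
  rw [show Set.range f = ↑(Finset.univ.image f) from by ext b; simp,
    Nat.card_coe_set_eq, Set.ncard_coe_finset]

lemma card_coord (S : Set (Fin n × Fin n)) :
    Nat.card {M : Mat n F // ∀ p : Fin n × Fin n, p ∉ S → M p.1 p.2 = 0}
      = Fintype.card F ^ S.ncard := by
  have e : {M : Mat n F // ∀ p : Fin n × Fin n, p ∉ S → M p.1 p.2 = 0} ≃ (S → F) :=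
    { toFun := fun M p => M.1 p.1.1 p.1.2
      invFun := fun v => ⟨Matrix.of fun i j => if h : (i, j) ∈ S then v ⟨(i, j), h⟩ else 0, by
        intro p hp
        have : ¬((p.1, p.2) ∈ S) := by rwa [Prod.mk.eta]
        simp only [Matrix.of_apply]
        rw [dif_neg this]⟩
      left_inv := fun M => Subtype.ext (by
        funext i j
        simp only [Matrix.of_apply]
        by_cases h : (i, j) ∈ S
        · rw [dif_pos h]
        · rw [dif_neg h]; exact (M.2 (i, j) h).symm)
      right_inv := fun v => by
        funext p
        have hmem : (p.1.1, p.1.2) ∈ S := by rw [Prod.mk.eta]; exact p.2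
        simp only [Matrix.of_apply]
        rw [dif_pos hmem] }
  rw [Nat.card_congr e, Nat.card_fun, Nat.card_coe_set_eq, Nat.card_eq_fintype_card]

end Counting

section Factor
variable {n : ℕ} {F : Type*} [Field F]

lemma mul_lam_support {Q : Set (Fin n × Fin n)} {X lam : Mat n F} (hX : X ∈ nPa Q)
    (i k : Fin n) (h : (i, k) ∉ adjL Q lam) : (X * lam) i k = 0 := by
  rw [Matrix.mul_apply]
  refine Finset.sum_eq_zero fun j _ => ?_
  by_cases h1 : X i j = 0
  · simp [h1]
  by_cases h2 : lam j k = 0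
  · simp [h2]
  exact absurd ⟨j, h2, by by_contra hc; exact h1 (hX i j hc)⟩ h

lemma lam_mul_support {Q : Set (Fin n × Fin n)} {Z lam : Mat n F} (hZ : Z ∈ nPa Q)
    (i k : Fin n) (h : (i, k) ∉ adjR Q lam) : (lam * Z) i k = 0 := by
  rw [Matrix.mul_apply]
  refine Finset.sum_eq_zero fun j _ => ?_
  by_cases h1 : lam i j = 0
  · simp [h1]
  by_cases h2 : Z j k = 0
  · simp [h2]
  exact absurd ⟨j, h1, by by_contra hc; exact h2 (hZ j k hc)⟩ h

lemma exists_left_factor {Q : Set (Fin n × Fin n)} {lam : Mat n F}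
    (hrow : ∀ i j j' : Fin n, lam i j ≠ 0 → lam i j' ≠ 0 → j = j')
    (hcol : ∀ i i' j : Fin n, lam i j ≠ 0 → lam i' j ≠ 0 → i = i')
    (M : Mat n F) (hM : ∀ p : Fin n × Fin n, p ∉ adjL Q lam → M p.1 p.2 = 0) :
    ∃ X ∈ nPa Q, X * lam = M := by
  refine ⟨Matrix.of fun i j =>
      if h : ∃ k, lam j k ≠ 0 then M i h.choose / lam j h.choose else 0, ?_, ?_⟩
  · intro i j hij
    simp only [Matrix.of_apply]
    by_cases h : ∃ k, lam j k ≠ 0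
    · rw [dif_pos h]
      have hMz : M i h.choose = 0 := by
        apply hM (i, h.choose)
        rintro ⟨j', hj'supp, hj'Q⟩
        have : j' = j := hcol j' j h.choose hj'supp h.choose_spec
        subst this
        exact hij hj'Q
      rw [hMz, zero_div]
    · rw [dif_neg h]
  · ext i k
    rw [Matrix.mul_apply]
    by_cases hex : ∃ j₀, lam j₀ k ≠ 0
    · obtain ⟨j₀, hj₀⟩ := hex
      rw [Finset.sum_eq_single j₀]
      · simp only [Matrix.of_apply]
        have h' : ∃ k', lam j₀ k' ≠ 0 := ⟨k, hj₀⟩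
        rw [dif_pos h']
        have hck : h'.choose = k := hrow j₀ h'.choose k h'.choose_spec hj₀
        rw [hck]
        exact div_mul_cancel₀ _ hj₀
      · intro j _ hne
        by_cases hz : lam j k = 0
        · rw [hz, mul_zero]
        · exact absurd (hcol j j₀ k hz hj₀) hne
      · exact fun h => absurd (Finset.mem_univ j₀) h
    · push_neg at hex
      rw [Finset.sum_eq_zero (fun j _ => by rw [hex j, mul_zero])]
      refine (hM (i, k) ?_).symm
      rintro ⟨j', hj'supp, _⟩
      exact hj'supp (hex j')

lemma exists_right_factor {Q : Set (Fin n × Fin n)} {lam : Mat n F}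
    (hrow : ∀ i j j' : Fin n, lam i j ≠ 0 → lam i j' ≠ 0 → j = j')
    (hcol : ∀ i i' j : Fin n, lam i j ≠ 0 → lam i' j ≠ 0 → i = i')
    (M : Mat n F) (hM : ∀ p : Fin n × Fin n, p ∉ adjR Q lam → M p.1 p.2 = 0) :
    ∃ Z ∈ nPa Q, lam * Z = M := by
  refine ⟨Matrix.of fun j k =>
      if h : ∃ i, lam i j ≠ 0 then M h.choose k / lam h.choose j else 0, ?_, ?_⟩
  · intro j k hjk
    simp only [Matrix.of_apply]
    by_cases h : ∃ i, lam i j ≠ 0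
    · rw [dif_pos h]
      have hMz : M h.choose k = 0 := by
        apply hM (h.choose, k)
        rintro ⟨m, hmsupp, hmQ⟩
        have : m = j := hrow h.choose m j hmsupp h.choose_spec
        subst this
        exact hjk hmQ
      rw [hMz, zero_div]
    · rw [dif_neg h]
  · ext i k
    rw [Matrix.mul_apply]
    by_cases hex : ∃ j₀, lam i j₀ ≠ 0
    · obtain ⟨j₀, hj₀⟩ := hex
      rw [Finset.sum_eq_single j₀]
      · simp only [Matrix.of_apply]
        have h' : ∃ i', lam i' j₀ ≠ 0 := ⟨i, hj₀⟩
        rw [dif_pos h']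
        have hci : h'.choose = i := hcol h'.choose i j₀ h'.choose_spec hj₀
        rw [hci]
        rw [mul_comm, div_mul_cancel₀ _ hj₀]
      · intro j _ hne
        by_cases hz : lam i j = 0
        · rw [hz, zero_mul]
        · exact absurd (hrow i j j₀ hz hj₀) hne
      · exact fun h => absurd (Finset.mem_univ j₀) h
    · push_neg at hex
      rw [Finset.sum_eq_zero (fun j _ => by rw [hex j, zero_mul])]
      refine (hM (i, k) ?_).symm
      rintro ⟨j', hj'supp, _⟩
      exact hj'supp (hex j')

end Factor

section OrbCard
variable {n : ℕ} {F : Type*} [Field F] [Fintype F]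

lemma right_inv_unique {a b c : Mat n F} (h1 : a * b = 1) (h2 : c * a = 1) : b = c := by
  calc b = 1 * b := (one_mul b).symm
    _ = c * a * b := by rw [h2]
    _ = c * (a * b) := mul_assoc _ _ _
    _ = c * 1 := by rw [h1]
    _ = c := mul_one c

lemma orb_card (Q : Set (Fin n × Fin n)) (hQ : IsPoset Q) (lam : Mat n F)
    (hrow : ∀ i j j' : Fin n, lam i j ≠ 0 → lam i j' ≠ 0 → j = j')
    (hcol : ∀ i i' j : Fin n, lam i j ≠ 0 → lam i' j ≠ 0 → i = i') :
    Nat.card (orbS Q lam) = Fintype.card F ^ (adjF Q lam).ncard := by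
  classical
  let f : (↥(nSub (F := F) Q) × ↥(nSub (F := F) Q)) →+ Mat n F :=
    AddMonoidHom.mk' (fun p => (p.1 : Mat n F) * lam - lam * (p.2 : Mat n F))
      (by
        intro p q
        simp only [Prod.fst_add, Prod.snd_add, Submodule.coe_add, add_mul, mul_add]
        abel)
  let Φ : (↥(nSub (F := F) Q) × ↥(nSub (F := F) Q)) → Mat n F :=
    fun p => (1 + (p.1 : Mat n F)) * lam * (1 + (p.2 : Mat n F))
  have hone : ∀ u : Mat n F, 1 + (u - 1) = u := fun u => by abel
  have hrangeΦ : Set.range Φ = orbS Q lam := by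
    ext z
    constructor
    · rintro ⟨⟨X, Y⟩, rfl⟩
      exact ⟨1 + X, one_add_mem_UPg hQ.1 X.2, 1 + Y, one_add_mem_UPg hQ.1 Y.2, rfl⟩
    · rintro ⟨g, hg, h, hh, rfl⟩
      refine ⟨(⟨g - 1, sub_one_mem_nPa hQ.1 hg⟩, ⟨h - 1, sub_one_mem_nPa hQ.1 hh⟩), ?_⟩
      show (1 + (g - 1)) * lam * (1 + (h - 1)) = g * lam * h
      rw [hone, hone]
  let St := {q : Mat n F × Mat n F //
    q.1 ∈ UPg (F := F) Q ∧ q.2 ∈ UPg (F := F) Q ∧ q.1 * lam * q.2 = lam}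
  have hfib : ∀ b ∈ Set.range Φ, Nat.card {p // Φ p = b} = Nat.card St := by
    rintro b ⟨p₀, hp₀⟩
    set g₀ : Mat n F := 1 + (p₀.1 : Mat n F) with hg₀
    set h₀ : Mat n F := 1 + (p₀.2 : Mat n F) with hh₀
    have hg₀U : g₀ ∈ UPg (F := F) Q := one_add_mem_UPg hQ.1 p₀.1.2
    have hh₀U : h₀ ∈ UPg (F := F) Q := one_add_mem_UPg hQ.1 p₀.2.2
    obtain ⟨g₀', hg₀'U, hgg', hg'g⟩ := UPg_exists_inv hQ hg₀U
    obtain ⟨h₀', hh₀'U, hhh', hh'h⟩ := UPg_exists_inv hQ hh₀U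
    have hb : g₀ * lam * h₀ = b := hp₀
    refine Nat.card_congr
      { toFun := fun p =>
          ⟨(g₀' * (1 + (p.1.1 : Mat n F)), (1 + (p.1.2 : Mat n F)) * h₀'),
            UPg_mul_mem hQ hg₀'U (one_add_mem_UPg hQ.1 p.1.1.2),
            UPg_mul_mem hQ (one_add_mem_UPg hQ.1 p.1.2.2) hh₀'U, by
              have hp : (1 + (p.1.1 : Mat n F)) * lam * (1 + (p.1.2 : Mat n F)) = b := p.2
              calc g₀' * (1 + (p.1.1 : Mat n F)) * lam * ((1 + (p.1.2 : Mat n F)) * h₀')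
                  = g₀' * ((1 + (p.1.1 : Mat n F)) * lam * (1 + (p.1.2 : Mat n F))) * h₀' := by
                    simp only [mul_assoc]
                _ = g₀' * b * h₀' := by rw [hp]
                _ = g₀' * (g₀ * lam * h₀) * h₀' := by rw [hb]
                _ = g₀' * g₀ * lam * (h₀ * h₀') := by simp only [mul_assoc]
                _ = lam := by rw [hg'g, hhh', one_mul, mul_one]⟩
        invFun := fun q =>
          ⟨(⟨g₀ * q.1.1 - 1, sub_one_mem_nPa hQ.1 (UPg_mul_mem hQ hg₀U q.2.1)⟩,
            ⟨q.1.2 * h₀ - 1, sub_one_mem_nPa hQ.1 (UPg_mul_mem hQ q.2.2.1 hh₀U)⟩), by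
              show (1 + (g₀ * q.1.1 - 1)) * lam * (1 + (q.1.2 * h₀ - 1)) = b
              rw [hone, hone]
              have hq : q.1.1 * lam * q.1.2 = lam := q.2.2.2
              calc g₀ * q.1.1 * lam * (q.1.2 * h₀)
                  = g₀ * (q.1.1 * lam * q.1.2) * h₀ := by simp only [mul_assoc]
                _ = g₀ * lam * h₀ := by rw [hq]
                _ = b := hb⟩
        left_inv := fun p => by
          refine Subtype.ext (Prod.ext (Subtype.ext ?_) (Subtype.ext ?_))
          · show g₀ * (g₀' * (1 + (p.1.1 : Mat n F))) - 1 = (p.1.1 : Mat n F)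
            rw [← mul_assoc, hgg', one_mul]
            abel
          · show (1 + (p.1.2 : Mat n F)) * h₀' * h₀ - 1 = (p.1.2 : Mat n F)
            rw [mul_assoc, hh'h, mul_one]
            abel
        right_inv := fun q => by
          refine Subtype.ext (Prod.ext ?_ ?_)
          · show g₀' * (1 + (g₀ * q.1.1 - 1)) = q.1.1
            rw [hone, ← mul_assoc, hg'g, one_mul]
          · show (1 + (q.1.2 * h₀ - 1)) * h₀' = q.1.2
            rw [hone, mul_assoc, hhh', mul_one] }
  have hcount1 : Fintype.card (↥(nSub (F := F) Q) × ↥(nSub (F := F) Q))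
      = Nat.card (Set.range Φ) * Nat.card St := card_fiber_const Φ _ hfib
  have hker_range : Nat.card (↥(nSub (F := F) Q) × ↥(nSub (F := F) Q))
      = Nat.card f.range * Nat.card f.ker := by
    rw [AddSubgroup.card_eq_card_quotient_mul_card_addSubgroup f.ker]
    congr 1
    exact Nat.card_congr (QuotientAddGroup.quotientKerEquivRange f).toEquiv
  have hStKer : Nat.card St = Nat.card f.ker := by
    have hch : ∀ g, g ∈ UPg (F := F) (n := n) Q →
        ∃ g', g' ∈ UPg (F := F) Q ∧ g * g' = 1 ∧ g' * g = 1 :=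
      fun g hg => UPg_exists_inv hQ hg
    choose inv hinvU hinv1 hinv2 using hch
    refine Nat.card_congr
      { toFun := fun q =>
          ⟨(⟨q.1.1 - 1, sub_one_mem_nPa hQ.1 q.2.1⟩,
            ⟨inv q.1.2 q.2.2.1 - 1, sub_one_mem_nPa hQ.1 (hinvU _ q.2.2.1)⟩), by
              rw [AddMonoidHom.mem_ker]
              show (q.1.1 - 1) * lam - lam * (inv q.1.2 q.2.2.1 - 1) = 0
              have h1 : q.1.1 * lam * (q.1.2 * inv q.1.2 q.2.2.1) = q.1.1 * lam :=
                (congrArg (fun t => q.1.1 * lam * t) (hinv1 _ q.2.2.1)).trans (mul_one _)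
              have h2 : q.1.1 * lam * (q.1.2 * inv q.1.2 q.2.2.1)
                  = q.1.1 * lam * q.1.2 * inv q.1.2 q.2.2.1 := (mul_assoc _ _ _).symm
              have h3 : q.1.1 * lam * q.1.2 * inv q.1.2 q.2.2.1 = lam * inv q.1.2 q.2.2.1 :=
                congrArg (fun t => t * inv q.1.2 q.2.2.1) q.2.2.2
              have hmain : q.1.1 * lam = lam * inv q.1.2 q.2.2.1 :=
                h1.symm.trans (h2.trans h3)
              have hre : (q.1.1 - 1) * lam - lam * (inv q.1.2 q.2.2.1 - 1)
                  = q.1.1 * lam - lam * inv q.1.2 q.2.2.1 := by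
                rw [sub_mul, mul_sub, one_mul, mul_one]
                abel
              rw [hre]
              exact sub_eq_zero.2 hmain⟩
        invFun := fun p =>
          ⟨(1 + (p.1.1 : Mat n F), inv (1 + (p.1.2 : Mat n F)) (one_add_mem_UPg hQ.1 p.1.2.2)),
            one_add_mem_UPg hQ.1 p.1.1.2, hinvU _ (one_add_mem_UPg hQ.1 p.1.2.2), by
              have hker : ((p.1.1 : Mat n F)) * lam - lam * ((p.1.2 : Mat n F)) = 0 :=
                AddMonoidHom.mem_ker.1 p.2
              have hml : (1 + (p.1.1 : Mat n F)) * lam = lam * (1 + (p.1.2 : Mat n F)) := by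
                rw [add_mul, mul_add, one_mul, mul_one]
                rw [sub_eq_zero] at hker
                rw [hker]
              rw [hml, mul_assoc, hinv1 _ (one_add_mem_UPg hQ.1 p.1.2.2), mul_one]⟩
        left_inv := fun q => by
          refine Subtype.ext (Prod.ext ?_ ?_)
          · show 1 + (q.1.1 - 1) = q.1.1
            exact hone _
          · show inv (1 + (inv q.1.2 q.2.2.1 - 1)) _ = q.1.2
            refine right_inv_unique (hinv1 _ _) ?_
            rw [hone]
            exact hinv1 _ q.2.2.1
        right_inv := fun p => by
          refine Subtype.ext (Prod.ext (Subtype.ext ?_) (Subtype.ext ?_))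
          · show (1 + (p.1.1 : Mat n F)) - 1 = (p.1.1 : Mat n F)
            abel
          · show inv (inv (1 + (p.1.2 : Mat n F)) _) _ - 1 = (p.1.2 : Mat n F)
            have : inv (inv (1 + (p.1.2 : Mat n F)) (one_add_mem_UPg hQ.1 p.1.2.2))
                (hinvU _ (one_add_mem_UPg hQ.1 p.1.2.2)) = 1 + (p.1.2 : Mat n F) := by
              refine right_inv_unique (hinv1 _ _) ?_
              exact hinv1 _ (one_add_mem_UPg hQ.1 p.1.2.2)
            rw [this]
            abel }
  have hrangef : Nat.card f.range = Fintype.card F ^ (adjF Q lam).ncard := by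
    rw [← card_coord (F := F) (n := n) (adjF Q lam)]
    refine Nat.card_congr (Equiv.subtypeEquivRight ?_)
    intro Mz
    rw [AddMonoidHom.mem_range]
    constructor
    · rintro ⟨⟨X, Z⟩, rfl⟩ p hp
      show ((X : Mat n F) * lam - lam * (Z : Mat n F)) p.1 p.2 = 0
      rw [Matrix.sub_apply,
        mul_lam_support X.2 p.1 p.2 (fun h => hp (Or.inl (by rwa [Prod.mk.eta] at h))),
        lam_mul_support Z.2 p.1 p.2 (fun h => hp (Or.inr (by rwa [Prod.mk.eta] at h))),
        sub_zero]
    · intro hMz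
      set M₁ : Mat n F := Matrix.of fun i k => if (i, k) ∈ adjL Q lam then Mz i k else 0
        with hM₁
      have hM₁supp : ∀ p : Fin n × Fin n, p ∉ adjL Q lam → M₁ p.1 p.2 = 0 := by
        intro p hp
        show (if (p.1, p.2) ∈ adjL Q lam then Mz p.1 p.2 else 0) = 0
        rw [if_neg (by rwa [Prod.mk.eta])]
      have hM₂supp : ∀ p : Fin n × Fin n, p ∉ adjR Q lam → (Mz - M₁) p.1 p.2 = 0 := by
        intro p hp
        rw [Matrix.sub_apply]
        show Mz p.1 p.2 - (if (p.1, p.2) ∈ adjL Q lam then Mz p.1 p.2 else 0) = 0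
        by_cases hA : p ∈ adjL Q lam
        · rw [if_pos (by rwa [Prod.mk.eta]), sub_self]
        · rw [if_neg (by rwa [Prod.mk.eta]), sub_zero]
          exact hMz p (fun h => h.elim hA hp)
      obtain ⟨X, hX, hXeq⟩ := exists_left_factor hrow hcol M₁ hM₁supp
      obtain ⟨Z, hZ, hZeq⟩ := exists_right_factor hrow hcol (Mz - M₁) hM₂supp
      refine ⟨(⟨X, hX⟩, ⟨-Z, nPa_neg_mem hZ⟩), ?_⟩
      show X * lam - lam * (-Z) = Mz
      rw [hXeq, mul_neg, hZeq, sub_neg_eq_add]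
      abel
  have hStfin : Finite St := Subtype.finite
  have hStne : Nonempty St := ⟨⟨(1, 1), one_mem_UPg, one_mem_UPg, by simp⟩⟩
  have hStpos : 0 < Nat.card St := Nat.card_pos
  rw [← hrangeΦ]
  refine Nat.eq_of_mul_eq_mul_right hStpos ?_
  calc Nat.card (Set.range Φ) * Nat.card St
      = Fintype.card (↥(nSub (F := F) Q) × ↥(nSub (F := F) Q)) := hcount1.symm
    _ = Nat.card (↥(nSub (F := F) Q) × ↥(nSub (F := F) Q)) := (Nat.card_eq_fintype_card).symm
    _ = Nat.card f.range * Nat.card f.ker := hker_range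
    _ = Fintype.card F ^ (adjF Q lam).ncard * Nat.card St := by rw [hrangef, hStKer]

end OrbCard

section Conj
variable {n : ℕ} {F : Type*} [Field F]

lemma UPg_mul_nPa {P : Set (Fin n × Fin n)} (hP : IsPoset P) (hN : NormalPoset P)
    {u M : Mat n F} (hu : u ∈ UPg (PosUpper n)) (hM : M ∈ nPa P) : u * M ∈ nPa P := by
  have h : u * M = M + (u - 1) * M := by noncomm_ring
  rw [h]
  exact nPa_add_mem hM (nPa_mul_mem_left hP hN (sub_one_mem_nPa (le_refl _) hu) hM)

lemma nPa_mul_UPg {P : Set (Fin n × Fin n)} (hP : IsPoset P) (hN : NormalPoset P)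
    {u M : Mat n F} (hu : u ∈ UPg (PosUpper n)) (hM : M ∈ nPa P) : M * u ∈ nPa P := by
  have h : M * u = M + M * (u - 1) := by noncomm_ring
  rw [h]
  exact nPa_add_mem hM (nPa_mul_mem_right hP hN hM (sub_one_mem_nPa (le_refl _) hu))

lemma conj_mem_UPg {P : Set (Fin n × Fin n)} (hP : IsPoset P) (hN : NormalPoset P)
    {u v a : Mat n F} (hu : u ∈ UPg (PosUpper n)) (hv : v ∈ UPg (PosUpper n))
    (huv : u * v = 1) (ha : a ∈ UPg P) : u * a * v ∈ UPg P := by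
  have h1 : u * a * v - 1 ∈ nPa P := by
    have he : u * a * v - 1 = u * (a - 1) * v := by
      rw [mul_sub, sub_mul, mul_one, huv]
    rw [he]
    exact nPa_mul_UPg hP hN hv (UPg_mul_nPa hP hN hu (sub_one_mem_nPa hP.1 ha))
  have h2 := one_add_mem_UPg hP.1 h1
  rwa [show (1 : Mat n F) + (u * a * v - 1) = u * a * v from by abel] at h2

lemma orbS_conj_card {P : Set (Fin n × Fin n)} (hP : IsPoset P) (hN : NormalPoset P)
    {g h x : Mat n F} (hg : g ∈ UPg (PosUpper n)) (hh : h ∈ UPg (PosUpper n)) :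
    Nat.card (orbS P (g * x * h)) = Nat.card (orbS P x) := by
  obtain ⟨g', hg', hgg', hg'g⟩ := UPg_exists_inv isPoset_posUpper hg
  obtain ⟨h', hh', hhh', hh'h⟩ := UPg_exists_inv isPoset_posUpper hh
  have cg : ∀ t : Mat n F, g * (g' * t) = t := fun t => by rw [← mul_assoc, hgg', one_mul]
  have cg' : ∀ t : Mat n F, g' * (g * t) = t := fun t => by rw [← mul_assoc, hg'g, one_mul]
  have ch : ∀ t : Mat n F, h * (h' * t) = t := fun t => by rw [← mul_assoc, hhh', one_mul]
  have ch' : ∀ t : Mat n F, h' * (h * t) = t := fun t => by rw [← mul_assoc, hh'h, one_mul]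
  have hset : orbS P (g * x * h) = (fun y => g * y * h) '' orbS P x := by
    ext z
    constructor
    · rintro ⟨a, ha, b, hb, rfl⟩
      refine ⟨(g' * a * g) * x * (h * b * h'),
        ⟨g' * a * g, conj_mem_UPg hP hN hg' hg hg'g ha,
         h * b * h', conj_mem_UPg hP hN hh hh' hhh' hb, rfl⟩, ?_⟩
      show g * (g' * a * g * x * (h * b * h')) * h = a * (g * x * h) * b
      simp only [mul_assoc, cg]
      rw [show h' * h = 1 from hh'h]
      rw [mul_one]
    · rintro ⟨y, ⟨a, ha, b, hb, rfl⟩, rfl⟩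
      refine ⟨g * a * g', conj_mem_UPg hP hN hg hg' hgg' ha,
        h' * b * h, conj_mem_UPg hP hN hh' hh hh'h hb, ?_⟩
      show g * (a * x * b) * h = g * a * g' * (g * x * h) * (h' * b * h)
      simp only [mul_assoc, cg']
      rw [show h * (h' * (b * h)) = b * h from ch (b * h)]
  rw [hset]
  have red : ∀ y : Mat n F, g' * (g * y * h) * h' = y := fun y => by
    calc g' * (g * y * h) * h' = g' * (g * (y * (h * h'))) := by simp only [mul_assoc]
      _ = g' * (g * (y * 1)) := by rw [hhh']
      _ = y := by rw [mul_one, cg']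
  have hinj : Function.Injective (fun y : Mat n F => g * y * h) := by
    intro y1 y2 he
    have he2 : g * y1 * h = g * y2 * h := he
    rw [← red y1, ← red y2, he2]
  rw [Nat.card_coe_set_eq, Set.ncard_image_of_injective _ hinj,
    ← Nat.card_coe_set_eq]

end Conj

/-- The number of two-sided `U_P`-orbits contained in the two-sided
`U_n`-orbit of `λ` equals `q^{|aux_P(λ)|}`. -/
theorem two_sided_orbit_decomposition {n : ℕ} {F : Type*} [Field F] [Fintype F]
    (P : Set (Fin n × Fin n)) (hP : IsPoset P) (hN : NormalPoset P)
    (lam : Mat n F) (hlam : lam ∈ SPa P) :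
    Nat.card {O : Set (Mat n F) | ∃ x : Mat n F,
        (∃ g ∈ UPg (F := F) (PosUpper n), ∃ h ∈ UPg (F := F) (PosUpper n),
          x = g * lam * h) ∧
        O = {y : Mat n F | ∃ a ∈ UPg (F := F) P, ∃ b ∈ UPg (F := F) P,
          y = a * x * b}} =
      Fintype.card F ^ (auxF P lam).ncard := by
  classical
  obtain ⟨hlP, hrow, hcol⟩ := hlam
  have hPU : IsPoset (PosUpper n) := isPoset_posUpper
  set Ω : Set (Mat n F) := orbS (PosUpper n) lam with hΩ
  have hstmt : {O : Set (Mat n F) | ∃ x : Mat n F,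
        (∃ g ∈ UPg (F := F) (PosUpper n), ∃ h ∈ UPg (F := F) (PosUpper n),
          x = g * lam * h) ∧
        O = {y : Mat n F | ∃ a ∈ UPg (F := F) P, ∃ b ∈ UPg (F := F) P,
          y = a * x * b}}
      = Set.range (fun x : ↥Ω => orbS P (x : Mat n F)) := by
    ext O
    simp only [Set.mem_setOf_eq, Set.mem_range]
    constructor
    · rintro ⟨x, hx, rfl⟩
      exact ⟨⟨x, hx⟩, rfl⟩
    · rintro ⟨⟨x, hx⟩, rfl⟩
      exact ⟨x, hx, rfl⟩
  have hself : ∀ x : Mat n F, x ∈ orbS P x := orbS_self P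
  have hsubΩ : ∀ x ∈ Ω, orbS P x ⊆ Ω := by
    intro x hx y hy
    obtain ⟨a, ha, b, hb, rfl⟩ := hy
    have h1 : a * x * b ∈ orbS (PosUpper n) x :=
      ⟨a, UPg_mono hP.1 ha, b, UPg_mono hP.1 hb, rfl⟩
    have h2 : orbS (PosUpper n) x = Ω := orbS_eq_of_mem hPU hx
    rw [← h2]
    exact h1
  have hOmem : ∀ (x : Mat n F), x ∈ Ω → ∀ y : Mat n F,
      y ∈ orbS P x ↔ (y ∈ Ω ∧ orbS P y = orbS P x) := by
    intro x hx y
    constructor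
    · intro hy
      exact ⟨hsubΩ x hx hy, orbS_eq_of_mem hP hy⟩
    · rintro ⟨_, heq⟩
      rw [← heq]
      exact hself y
  have hcardP : ∀ x ∈ Ω, Nat.card (orbS P x) = Fintype.card F ^ (adjF P lam).ncard := by
    rintro x ⟨g, hg, h, hh, rfl⟩
    rw [orbS_conj_card hP hN hg hh]
    exact orb_card P hP lam hrow hcol
  have hmain : Fintype.card ↥Ω
      = Nat.card (Set.range (fun x : ↥Ω => orbS P (x : Mat n F)))
        * Fintype.card F ^ (adjF P lam).ncard := by
    refine card_fiber_const _ _ ?_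
    rintro O ⟨x₀, rfl⟩
    have e : {a : ↥Ω // orbS P (a : Mat n F) = orbS P (x₀ : Mat n F)}
        ≃ ↥(orbS P (x₀ : Mat n F)) :=
      { toFun := fun a => ⟨a.1.1, by
          have hm := hself ((a : ↥Ω) : Mat n F)
          rwa [a.2] at hm⟩
        invFun := fun y => ⟨⟨y.1, ((hOmem x₀ x₀.2 y.1).1 y.2).1⟩,
          ((hOmem x₀ x₀.2 y.1).1 y.2).2⟩
        left_inv := fun a => Subtype.ext (Subtype.ext rfl)
        right_inv := fun y => Subtype.ext rfl }
    rw [Nat.card_congr e]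
    exact hcardP x₀ x₀.2
  have hΩcard : Nat.card ↥Ω = Fintype.card F ^ (adjF (PosUpper n) lam).ncard :=
    orb_card (PosUpper n) hPU lam hrow hcol
  have hsubadj : adjF P lam ⊆ adjF (PosUpper n) lam := by
    rintro p (⟨j, hsupp, hQ⟩ | ⟨j, hsupp, hQ⟩)
    · exact Or.inl ⟨j, hsupp, hP.1 hQ⟩
    · exact Or.inr ⟨j, hsupp, hP.1 hQ⟩
  have hncard : (auxF P lam).ncard + (adjF P lam).ncard = (adjF (PosUpper n) lam).ncard :=
    Set.ncard_diff_add_ncard_of_subset hsubadj (Set.toFinite _)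
  have hpos : 0 < Fintype.card F ^ (adjF P lam).ncard :=
    pow_pos (Fintype.card_pos_iff.2 ⟨0⟩) _
  rw [hstmt]
  refine Nat.eq_of_mul_eq_mul_right hpos ?_
  calc Nat.card (Set.range (fun x : ↥Ω => orbS P (x : Mat n F)))
        * Fintype.card F ^ (adjF P lam).ncard
      = Fintype.card ↥Ω := hmain.symm
    _ = Nat.card ↥Ω := (Nat.card_eq_fintype_card).symm
    _ = Fintype.card F ^ (adjF (PosUpper n) lam).ncard := hΩcard
    _ = Fintype.card F ^ ((auxF P lam).ncard + (adjF P lam).ncard) := by rw [hncard]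
    _ = Fintype.card F ^ (auxF P lam).ncard * Fintype.card F ^ (adjF P lam).ncard :=
        pow_add _ _ _
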